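/- Fix D ∈ ℕ. Identify nodes of the complete (perfect) binary tree of depth D with boolean strings s ∈ List Bool of length ≤ D, the root being the empty string. A pruned (regular) subtree T rooted at the root is determined recursively: a node of depth D must be a leaf, and a node of depth < D is either a leaf of T or an internal node of T with both children in T. Let g : List Bool → ℝ with g(s) = 0 whenever the length of s equals D, let q : List Bool → ℝ, and let x : ℕ → Bool determine a path (at a node s of depth d, the path descends to the child s ++ [x(d)]). For each pruned subtree T, define its weight p(T) = (∏_{s internal in T} g(s)) · (∏_{s leaf of T} (1 − g(s))), and let leaf_T(x) denote the unique leaf of T lying on the path determined by x. Define Q : List Bool → ℝ recursively by Q(s) = q(s) if s has length D, and Q(s) = (1 − g(s)) · q(s) + g(s) · Q(s ++ [x(length of s)]) otherwise. Then the sum over all pruned subtrees T of the complete binary tree of depth D of p(T) · q(leaf_T(x)) equals Q applied to the empty string (the root). -/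
import Mathlib


/-- Pruned (regular) subtrees of the complete binary tree of depth `d`: a node of
remaining depth `0` must be a leaf, and a node of positive remaining depth is either a
leaf or an internal node with both children present. -/
inductive PrunedTree : ℕ → Type where
  | leaf : {d : ℕ} → PrunedTree d
  | node : {d : ℕ} → PrunedTree d → PrunedTree d → PrunedTree (d + 1)

/-- The list of all pruned subtrees of the complete binary tree of depth `d`. -/
def allPrunedTrees : (d : ℕ) → List (PrunedTree d)
  | 0 => [PrunedTree.leaf]
  | d + 1 =>
      PrunedTree.leaf ::
        (allPrunedTrees d).flatMap fun l =>
          (allPrunedTrees d).map fun r => PrunedTree.node l r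

/-- The prior weight `p(T) = (∏_{s internal} g s) * (∏_{s leaf} (1 - g s))` of a pruned
subtree rooted at the node with address `s : List Bool` (the root of the whole tree
being the empty string, and the children of `s` being `s ++ [false]` and
`s ++ [true]`). -/
def prunedTreeWeight (g : List Bool → ℝ) : {d : ℕ} → List Bool → PrunedTree d → ℝ
  | _, s, PrunedTree.leaf => 1 - g s
  | _, s, PrunedTree.node l r =>
      g s * (prunedTreeWeight g (s ++ [false]) l * prunedTreeWeight g (s ++ [true]) r)

/-- The unique leaf of a pruned subtree rooted at address `s` lying on the path
determined by `x : ℕ → Bool` (at a node of depth `d` the path descends to the child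
`s ++ [x d]`). -/
def prunedTreeLeaf (x : ℕ → Bool) : {d : ℕ} → List Bool → PrunedTree d → List Bool
  | _, s, PrunedTree.leaf => s
  | _, s, PrunedTree.node l r =>
      if x s.length then prunedTreeLeaf x (s ++ [true]) r
      else prunedTreeLeaf x (s ++ [false]) l

/-- The meta-tree recursion `Q`: at a node `s` with remaining depth `0` (i.e. depth
`D`), `Q s = q s`; otherwise `Q s = (1 - g s) * q s + g s * Q (s ++ [x s.length])`.
The first argument is the remaining depth `D - s.length`. -/
def metaTreeQ (g q : List Bool → ℝ) (x : ℕ → Bool) : ℕ → List Bool → ℝ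
  | 0, s => q s
  | d + 1, s => (1 - g s) * q s + g s * metaTreeQ g q x d (s ++ [x s.length])

lemma sum_map_flatMap {α β : Type*} (L : List α) (f : α → List β) (h : β → ℝ) :
    ((L.flatMap f).map h).sum = (L.map (fun a => ((f a).map h).sum)).sum := by
  induction L with
  | nil => simp
  | cons a t ih => simp [List.flatMap_cons, ih]

lemma weight_sum (D : ℕ) (g : List Bool → ℝ)
    (hg : ∀ s : List Bool, s.length = D → g s = 0) :
    ∀ (d : ℕ) (s : List Bool), s.length + d = D →
      ((allPrunedTrees d).map (prunedTreeWeight g s)).sum = 1 := by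
  intro d
  induction d with
  | zero =>
      intro s hs
      simp [allPrunedTrees, prunedTreeWeight, hg s (by simpa using hs)]
  | succ d ih =>
      intro s hs
      have h0 : (s ++ [false]).length + d = D := by simp; omega
      have h1 : (s ++ [true]).length + d = D := by simp; omega
      simp only [allPrunedTrees, List.map_cons, List.sum_cons, prunedTreeWeight]
      rw [sum_map_flatMap]
      have : ∀ l : PrunedTree d,
          (((allPrunedTrees d).map fun r => PrunedTree.node l r).map
            (prunedTreeWeight g s)).sum
          = g s * prunedTreeWeight g (s ++ [false]) l := by
        intro l
        rw [List.map_map]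
        have : (prunedTreeWeight g s ∘ fun r => PrunedTree.node l r)
            = fun r => (g s * prunedTreeWeight g (s ++ [false]) l)
                * prunedTreeWeight g (s ++ [true]) r := by
          funext r; simp [prunedTreeWeight]; ring
        rw [this, List.sum_map_mul_left, ih _ h1, mul_one]
      simp only [this]
      rw [List.sum_map_mul_left, ih _ h0]
      ring

lemma metaTree_main (D : ℕ) (g q : List Bool → ℝ) (x : ℕ → Bool)
    (hg : ∀ s : List Bool, s.length = D → g s = 0) :
    ∀ (d : ℕ) (s : List Bool), s.length + d = D →
      ((allPrunedTrees d).map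
          (fun T => prunedTreeWeight g s T * q (prunedTreeLeaf x s T))).sum
        = metaTreeQ g q x d s := by
  intro d
  induction d with
  | zero =>
      intro s hs
      simp [allPrunedTrees, prunedTreeWeight, prunedTreeLeaf, metaTreeQ,
        hg s (by simpa using hs)]
  | succ d ih =>
      intro s hs
      have h0 : (s ++ [false]).length + d = D := by simp; omega
      have h1 : (s ++ [true]).length + d = D := by simp; omega
      simp only [allPrunedTrees, List.map_cons, List.sum_cons, prunedTreeWeight,
        prunedTreeLeaf, metaTreeQ]
      rw [sum_map_flatMap]
      cases hx : x s.length with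
      | true =>
          have hinner : ∀ l : PrunedTree d,
              (((allPrunedTrees d).map fun r => PrunedTree.node l r).map
                (fun T => prunedTreeWeight g s T * q (prunedTreeLeaf x s T))).sum
              = (g s * prunedTreeWeight g (s ++ [false]) l)
                  * metaTreeQ g q x d (s ++ [true]) := by
            intro l
            rw [List.map_map]
            have : ((fun T => prunedTreeWeight g s T * q (prunedTreeLeaf x s T))
                ∘ fun r => PrunedTree.node l r)
                = fun r => (g s * prunedTreeWeight g (s ++ [false]) l)
                    * (prunedTreeWeight g (s ++ [true]) r
                        * q (prunedTreeLeaf x (s ++ [true]) r)) := by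
              funext r; simp [prunedTreeWeight, prunedTreeLeaf, hx]; ring
            rw [this, List.sum_map_mul_left, ih _ h1]
          simp only [hinner]
          rw [List.sum_map_mul_right, List.sum_map_mul_left,
            weight_sum D g hg d _ h0]
          ring
      | false =>
          have hinner : ∀ l : PrunedTree d,
              (((allPrunedTrees d).map fun r => PrunedTree.node l r).map
                (fun T => prunedTreeWeight g s T * q (prunedTreeLeaf x s T))).sum
              = (g s * (prunedTreeWeight g (s ++ [false]) l
                  * q (prunedTreeLeaf x (s ++ [false]) l))) := by
            intro l
            rw [List.map_map]
            have : ((fun T => prunedTreeWeight g s T * q (prunedTreeLeaf x s T))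
                ∘ fun r => PrunedTree.node l r)
                = fun r => (g s * (prunedTreeWeight g (s ++ [false]) l
                    * q (prunedTreeLeaf x (s ++ [false]) l)))
                    * prunedTreeWeight g (s ++ [true]) r := by
              funext r; simp [prunedTreeWeight, prunedTreeLeaf, hx]; ring
            rw [this, List.sum_map_mul_left, weight_sum D g hg d _ h1, mul_one]
          simp only [hinner]
          rw [List.sum_map_mul_left, ih _ h0]

/-- Meta-tree computation theorem: if `g s = 0` at every node of depth `D`, then the
mixture `∑_T p(T) * q(leaf_T(x))` over all pruned subtrees `T` of the complete binary
tree of depth `D` equals the value `Q` of the depth-first recursion at the root. -/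
theorem metaTree_mixture_eq_recursion
    (D : ℕ) (g q : List Bool → ℝ) (x : ℕ → Bool)
    (hg : ∀ s : List Bool, s.length = D → g s = 0) :
    ((allPrunedTrees D).map
        (fun T => prunedTreeWeight g ([] : List Bool) T
          * q (prunedTreeLeaf x ([] : List Bool) T))).sum
      = metaTreeQ g q x D ([] : List Bool) := by
  exact metaTree_main D g q x hg D [] (by simp)
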